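/- Let μ, ν ∈ 𝓜 with μ(ℝ) ≤ ν(ℝ), and let S^ν(μ) be the generalized shadow measure. Then p_{S^ν(μ)} = p_{μ,ν} and c_{S^ν(μ)} = c_{μ,ν}, where p_θ := sup_{k∈ℝ}(P_μ(k) − P_θ(k)) and c_θ := sup_{k∈ℝ}(C_μ(k) − C_θ(k)). -/

import Mathlib

open MeasureTheory Set Filter

noncomputable section

/-- Total mass of a measure on ℝ, as a real number. -/
def mass (η : Measure ℝ) : ℝ := (η univ).toReal

/-- Mean (first moment) of a measure on ℝ. -/
def mean (η : Measure ℝ) : ℝ := ∫ x, x ∂η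

/-- `η ∈ 𝓜`: finite Borel measure on ℝ with finite first moment. -/
def MemM (η : Measure ℝ) : Prop := IsFiniteMeasure η ∧ Integrable (fun x => x) η

/-- Put potential `P_η(k) = ∫ (k-x)⁺ dη`. -/
def Pput (η : Measure ℝ) (k : ℝ) : ℝ := ∫ x, max (k - x) 0 ∂η

/-- Call potential `C_η(k) = ∫ (x-k)⁺ dη`. -/
def Ccall (η : Measure ℝ) (k : ℝ) : ℝ := ∫ x, max (x - k) 0 ∂η

/-- `p_{μ,ν} = sup_k (P_μ(k) - P_ν(k))`. -/
def pconst (μ ν : Measure ℝ) : ℝ := ⨆ k : ℝ, (Pput μ k - Pput ν k)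

/-- `c_{μ,ν} = sup_k (C_μ(k) - C_ν(k))`. -/
def cconst (μ ν : Measure ℝ) : ℝ := ⨆ k : ℝ, (Ccall μ k - Ccall ν k)

/-- `π ∈ Π(μ,ν)`: coupling with marginals μ and ν. -/
def IsCoupling (μ ν : Measure ℝ) (π : Measure (ℝ × ℝ)) : Prop :=
  π.fst = μ ∧ π.snd = ν

open Classical in
/-- Barycenter `π̄_x = ∫ y π_x(dy)` of the disintegration of π at x. -/
def bar (π : Measure (ℝ × ℝ)) (x : ℝ) : ℝ :=
  if h : IsFiniteMeasure π then
    haveI := h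
    ∫ y, y ∂(π.condKernel x)
  else 0

/-- Weak `L¹` transport cost `∫ |x - π̄_x| μ(dx)`. -/
def WOTcost (μ : Measure ℝ) (π : Measure (ℝ × ℝ)) : ℝ := ∫ x, |x - bar π x| ∂μ

/-- `V(μ,ν) = inf over couplings of the weak L¹ cost`. -/
def V (μ ν : Measure ℝ) : ℝ :=
  sInf {r | ∃ π, IsCoupling μ ν π ∧ r = WOTcost μ π}

/-- Martingale couplings. -/
def IsMartCoupling (μ ν : Measure ℝ) (π : Measure (ℝ × ℝ)) : Prop :=
  IsCoupling μ ν π ∧ ∀ᵐ x ∂μ, bar π x = x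

/-- Supermartingale couplings. -/
def IsSupCoupling (μ ν : Measure ℝ) (π : Measure (ℝ × ℝ)) : Prop :=
  IsCoupling μ ν π ∧ ∀ᵐ x ∂μ, bar π x ≤ x

/-- Submartingale couplings. -/
def IsSubCoupling (μ ν : Measure ℝ) (π : Measure (ℝ × ℝ)) : Prop :=
  IsCoupling μ ν π ∧ ∀ᵐ x ∂μ, x ≤ bar π x

/-- `x⁻ = inf {k : P_ν(k) + p_{μ,ν} = P_μ(k)}`. -/
def xminus (μ ν : Measure ℝ) : ℝ := sInf {k | Pput ν k + pconst μ ν = Pput μ k}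

/-- `x⁺ = sup {k : P_ν(k) + p_{μ,ν} = P_μ(k)}`. -/
def xplus (μ ν : Measure ℝ) : ℝ := sSup {k | Pput ν k + pconst μ ν = Pput μ k}

/-- Left derivative. -/
def leftD (f : ℝ → ℝ) (x : ℝ) : ℝ := derivWithin f (Iio x) x

/-- Right derivative. -/
def rightD (f : ℝ → ℝ) (x : ℝ) : ℝ := derivWithin f (Ioi x) x

/-- `η⁻ = μ|_{(-∞,x⁻)}`. -/
def etaMinus (μ ν : Measure ℝ) : Measure ℝ := μ.restrict (Iio (xminus μ ν))

/-- `η⁰ = μ|_{[x⁻,x⁺]}`. -/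
def etaZero (μ ν : Measure ℝ) : Measure ℝ := μ.restrict (Icc (xminus μ ν) (xplus μ ν))

/-- `η⁺ = μ|_{(x⁺,∞)}`. -/
def etaPlus (μ ν : Measure ℝ) : Measure ℝ := μ.restrict (Ioi (xplus μ ν))

/-- `χ⁻ = ν|_{(-∞,x⁻)} + (Δ⁻ - P_ν'(x⁻-)) δ_{x⁻}`. -/
def chiMinus (μ ν : Measure ℝ) : Measure ℝ :=
  ν.restrict (Iio (xminus μ ν)) +
    (ENNReal.ofReal (leftD (Pput μ) (xminus μ ν) - leftD (Pput ν) (xminus μ ν))) •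
      Measure.dirac (xminus μ ν)

/-- `χ⁺ = ν|_{(x⁺,∞)} + (Δ⁺ - P_ν'(x⁺+)) δ_{x⁺}`. -/
def chiPlus (μ ν : Measure ℝ) : Measure ℝ :=
  ν.restrict (Ioi (xplus μ ν)) +
    (ENNReal.ofReal (rightD (Pput μ) (xplus μ ν) - rightD (Pput ν) (xplus μ ν))) •
      Measure.dirac (xplus μ ν)

/-- `χ⁰ = ν - χ⁻ - χ⁺`. -/
def chiZero (μ ν : Measure ℝ) : Measure ℝ := ν - chiMinus μ ν - chiPlus μ ν

/-- `Π*(μ,ν)`: couplings of the form sub + martingale + super on the decomposition. -/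
def PiStar (μ ν : Measure ℝ) : Set (Measure (ℝ × ℝ)) :=
  {π | IsCoupling μ ν π ∧
    ∃ πm π0 πp : Measure (ℝ × ℝ),
      π = πm + π0 + πp ∧
      IsSubCoupling (etaMinus μ ν) (chiMinus μ ν) πm ∧
      IsMartCoupling (etaZero μ ν) (chiZero μ ν) π0 ∧
      IsSupCoupling (etaPlus μ ν) (chiPlus μ ν) πp}

/-- Convex order `η ≤_c χ`. -/
def CxOrder (η χ : Measure ℝ) : Prop :=
  ∀ f : ℝ → ℝ, ConvexOn ℝ univ f → Integrable f η → Integrable f χ →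
    ∫ x, f x ∂η ≤ ∫ x, f x ∂χ

/-- Convex decreasing order `η ≤_cd χ`. -/
def CdOrder (η χ : Measure ℝ) : Prop :=
  ∀ f : ℝ → ℝ, ConvexOn ℝ univ f → Antitone f → Integrable f η → Integrable f χ →
    ∫ x, f x ∂η ≤ ∫ x, f x ∂χ

/-- Convex increasing order `η ≤_ci χ`. -/
def CiOrder (η χ : Measure ℝ) : Prop :=
  ∀ f : ℝ → ℝ, ConvexOn ℝ univ f → Monotone f → Integrable f η → Integrable f χ →
    ∫ x, f x ∂η ≤ ∫ x, f x ∂χ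

/-- Convex hull (largest convex minorant) of a function. -/
def convHullFn (f : ℝ → ℝ) : ℝ → ℝ :=
  fun x => sSup {v : ℝ | ∃ g : ℝ → ℝ, ConvexOn ℝ univ g ∧ (∀ y, g y ≤ f y) ∧ v = g x}

/-- `S` is the generalized shadow measure of μ in ν, characterized by its put potential. -/
def IsShadow (μ ν S : Measure ℝ) : Prop :=
  MemM S ∧
    ∀ k, Pput S k = Pput ν k - convHullFn (fun t => Pput ν t - Pput μ t) k - pconst μ ν

/-- `𝒯_{μ,ν}`: possible target laws of μ in ν. -/
def TargetSet (μ ν : Measure ℝ) : Set (Measure ℝ) :=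
  {θ | MemM θ ∧ mass θ = mass μ ∧ θ ≤ ν}


section Aux

variable {η : Measure ℝ}

lemma integrable_call (h : MemM η) (k : ℝ) : Integrable (fun x => max (x - k) 0) η := by
  haveI := h.1
  have hi : Integrable (fun x : ℝ => |x| + |k|) η := h.2.abs.add (integrable_const _)
  refine hi.mono' (((continuous_id.sub continuous_const).max continuous_const).aestronglyMeasurable) ?_
  filter_upwards with x
  rw [Real.norm_eq_abs, abs_of_nonneg (le_max_right _ _)]
  have h1 := le_abs_self x
  have h2 := neg_abs_le k
  have h3 := abs_nonneg x
  have h4 := abs_nonneg k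
  exact max_le (by linarith) (by linarith)

lemma integrable_put (h : MemM η) (k : ℝ) : Integrable (fun x => max (k - x) 0) η := by
  haveI := h.1
  have hi : Integrable (fun x : ℝ => |x| + |k|) η := h.2.abs.add (integrable_const _)
  refine hi.mono' ((continuous_const.sub continuous_id).max continuous_const).aestronglyMeasurable ?_
  filter_upwards with x
  rw [Real.norm_eq_abs, abs_of_nonneg (le_max_right _ _)]
  have h1 := neg_abs_le x
  have h2 := le_abs_self k
  have h3 := abs_nonneg x
  have h4 := abs_nonneg k
  exact max_le (by linarith) (by linarith)

lemma parity (h : MemM η) (k : ℝ) :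
    Ccall η k = Pput η k + mean η - mass η * k := by
  haveI := h.1
  have hpt : ∀ x : ℝ, max (x - k) 0 = max (k - x) 0 + (x - k) := by
    intro x
    rcases le_total x k with hx | hx
    · rw [max_eq_right (by linarith), max_eq_left (by linarith)]; ring
    · rw [max_eq_left (by linarith), max_eq_right (by linarith)]; ring
  have hint : Integrable (fun x : ℝ => x - k) η := h.2.sub (integrable_const k)
  calc Ccall η k = ∫ x, (max (k - x) 0 + (x - k)) ∂η := by
        unfold Ccall; exact integral_congr_ae (Filter.Eventually.of_forall hpt)
    _ = Pput η k + ∫ x, (x - k) ∂η := by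
        rw [integral_add (integrable_put h k) hint]; rfl
    _ = Pput η k + (mean η - mass η * k) := by
        rw [integral_sub h.2 (integrable_const k), integral_const]
        simp [mean, mass, smul_eq_mul, mul_comm]
        exact Or.inl rfl
    _ = _ := by ring

lemma Pput_nonneg (k : ℝ) : 0 ≤ Pput η k :=
  integral_nonneg fun x => le_max_right _ _

lemma Ccall_nonneg (k : ℝ) : 0 ≤ Ccall η k :=
  integral_nonneg fun x => le_max_right _ _

lemma Pput_mono (h : MemM η) {k k' : ℝ} (hk : k ≤ k') : Pput η k ≤ Pput η k' :=
  integral_mono (integrable_put h k) (integrable_put h k')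
    (fun x => max_le_max (by linarith) le_rfl)

lemma Ccall_anti (h : MemM η) {k k' : ℝ} (hk : k ≤ k') : Ccall η k' ≤ Ccall η k :=
  integral_mono (integrable_call h k') (integrable_call h k)
    (fun x => max_le_max (by linarith) le_rfl)

lemma Ccall_tendsto (h : MemM η) : Tendsto (fun k => Ccall η k) atTop (nhds 0) := by
  haveI := h.1
  have h0 : (0 : ℝ) = ∫ x, (0 : ℝ) ∂η := by simp
  rw [h0]
  refine tendsto_integral_filter_of_dominated_convergence (fun x => |x|)
    (Filter.Eventually.of_forall fun k =>
      (((continuous_id.sub continuous_const).max continuous_const).aestronglyMeasurable)) ?_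
    h.2.abs ?_
  · filter_upwards [Filter.eventually_ge_atTop (0 : ℝ)] with k hk
    filter_upwards with x
    rw [Real.norm_eq_abs, abs_of_nonneg (le_max_right _ _)]
    have := le_abs_self x
    exact max_le (by linarith) (abs_nonneg x)
  · filter_upwards with x
    refine Tendsto.congr' ?_ (tendsto_const_nhds (α := ℝ))
    filter_upwards [Filter.eventually_ge_atTop x] with k hk
    rw [max_eq_right (by linarith)]

end Aux

theorem stmt_12 (μ ν S : Measure ℝ) (hμ : MemM μ) (hν : MemM ν)
    (hmass : mass μ ≤ mass ν) (hS : IsShadow μ ν S) :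
    pconst μ S = pconst μ ν ∧ cconst μ S = cconst μ ν := by
  obtain ⟨hSM, hSP⟩ := hS
  haveI := hμ.1; haveI := hν.1; haveI := hSM.1
  set p := pconst μ ν with hp
  set c := cconst μ ν with hc
  set f : ℝ → ℝ := fun t => Pput ν t - Pput μ t with hfdef
  set F := convHullFn f with hFdef
  set a := mass ν - mass μ with ha
  set b := mean μ - mean ν with hb
  have ha0 : 0 ≤ a := by rw [ha]; linarith
  -- relation between f and the call functions
  have hfab : ∀ k, f k = a * k + b + (Ccall ν k - Ccall μ k) := by
    intro k
    have h1 := parity hμ k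
    have h2 := parity hν k
    simp only [hfdef, ha, hb]
    linarith [h1, h2, sub_mul (mass ν) (mass μ) k]
  -- boundedness of Pput μ - Pput ν
  have bddAbove1 : BddAbove (Set.range fun k => Pput μ k - Pput ν k) := by
    refine ⟨max (Pput μ 0) (Ccall μ 0 + (mean ν - mean μ)), ?_⟩
    rintro - ⟨k, rfl⟩
    show Pput μ k - Pput ν k ≤ _
    rcases le_total k 0 with hk | hk
    · have := Pput_mono hμ hk
      have := Pput_nonneg (η := ν) k
      exact le_max_of_le_left (by linarith)
    · have h1 := hfab k
      have h2 := Ccall_anti hμ hk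
      have h3 := Ccall_nonneg (η := ν) k
      have h4 : 0 ≤ a * k := mul_nonneg ha0 hk
      refine le_max_of_le_right ?_
      have : Pput μ k - Pput ν k = -f k := by rw [hfdef]; ring
      rw [this, h1, hb]
      linarith
  have hfp : ∀ k, -p ≤ f k := by
    intro k
    have := le_ciSup bddAbove1 k
    rw [hp, pconst] at *
    simp only [hfdef]
    linarith [this]
  -- boundedness of Ccall μ - Ccall ν
  have bddAbove2 : BddAbove (Set.range fun k => Ccall μ k - Ccall ν k) := by
    refine ⟨max (Ccall μ 0) (Pput μ 0 + b), ?_⟩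
    rintro - ⟨k, rfl⟩
    show Ccall μ k - Ccall ν k ≤ _
    rcases le_total 0 k with hk | hk
    · have := Ccall_anti hμ hk
      have := Ccall_nonneg (η := ν) k
      exact le_max_of_le_left (by linarith)
    · have h1 := hfab k
      have h2 : Ccall μ k - Ccall ν k = a * k + b - f k := by rw [h1]; ring
      have h3 : a * k ≤ 0 := mul_nonpos_of_nonneg_of_nonpos ha0 hk
      have h4 : -f k ≤ Pput μ k := by
        have := Pput_nonneg (η := ν) k; simp only [hfdef]; linarith
      have h5 := Pput_mono hμ hk
      exact le_max_of_le_right (by linarith)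
  have hfc : ∀ k, a * k + b - c ≤ f k := by
    intro k
    have h1 := le_ciSup bddAbove2 k
    rw [hc, cconst] at *
    have h2 : Ccall μ k - Ccall ν k = a * k + b - f k := by rw [hfab k]; ring
    linarith [h1, h2.symm.le]
  -- convex hull basic facts
  have hmemconst : ∀ x : ℝ, (-p : ℝ) ∈ {v : ℝ | ∃ g : ℝ → ℝ,
      ConvexOn ℝ univ g ∧ (∀ y, g y ≤ f y) ∧ v = g x} :=
    fun x => ⟨fun _ => -p, convexOn_const _ convex_univ, hfp, rfl⟩
  have hne : ∀ x : ℝ, {v : ℝ | ∃ g : ℝ → ℝ,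
      ConvexOn ℝ univ g ∧ (∀ y, g y ≤ f y) ∧ v = g x}.Nonempty :=
    fun x => ⟨-p, hmemconst x⟩
  have hbdd : ∀ x : ℝ, BddAbove {v : ℝ | ∃ g : ℝ → ℝ,
      ConvexOn ℝ univ g ∧ (∀ y, g y ≤ f y) ∧ v = g x} := by
    intro x
    exact ⟨f x, by rintro v ⟨g, hg, hgf, rfl⟩; exact hgf x⟩
  have hFle : ∀ x, F x ≤ f x := by
    intro x
    exact csSup_le (hne x) (by rintro v ⟨g, hg, hgf, rfl⟩; exact hgf x)
  have hFgep : ∀ x, -p ≤ F x := fun x => le_csSup (hbdd x) (hmemconst x)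
  have haff : ConvexOn ℝ univ (fun k : ℝ => a * k + b - c) := by
    refine ⟨convex_univ, ?_⟩
    intro x _ y _ s t hs ht hst
    have ht' : t = 1 - s := by linarith
    subst ht'
    simp only [smul_eq_mul]
    apply le_of_eq
    ring
  have hFgeaff : ∀ x, a * x + b - c ≤ F x :=
    fun x => le_csSup (hbdd x) ⟨_, haff, hfc, rfl⟩
  have hFconv : ConvexOn ℝ univ F := by
    refine ⟨convex_univ, ?_⟩
    intro x _ y _ s t hs ht hst
    refine csSup_le (hne _) ?_
    rintro v ⟨g, hg, hgf, rfl⟩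
    have h1 : g (s • x + t • y) ≤ s • g x + t • g y :=
      hg.2 (mem_univ x) (mem_univ y) hs ht hst
    have h2 : g x ≤ F x := le_csSup (hbdd x) ⟨g, hg, hgf, rfl⟩
    have h3 : g y ≤ F y := le_csSup (hbdd y) ⟨g, hg, hgf, rfl⟩
    simp only [smul_eq_mul] at *
    nlinarith
  -- the function ψ
  set ψ : ℝ → ℝ := fun k => F k - (a * k + b) with hψdef
  have hψlb : ∀ k, -c ≤ ψ k := fun k => by
    have := hFgeaff k; simp only [hψdef]; linarith
  have hψub : ∀ k, 0 ≤ k → ψ k ≤ Ccall ν 0 := by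
    intro k hk
    have h1 := hFle k
    have h2 := hfab k
    have h3 := Ccall_nonneg (η := μ) k
    have h4 := Ccall_anti hν hk
    simp only [hψdef]
    linarith
  have hψanti : Antitone ψ := by
    intro x y hxy
    rcases eq_or_lt_of_le hxy with rfl | hxy
    · exact le_rfl
    by_contra hcon
    push_neg at hcon
    set s := (ψ y - ψ x) / (y - x) with hs
    have hyx : 0 < y - x := by linarith
    have hs0 : 0 < s := div_pos (by linarith) hyx
    have hseq : s * (y - x) = ψ y - ψ x := div_mul_cancel₀ _ (by linarith)
    -- the affine function z ↦ ψ x + s * (z - x) tends to atTop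
    have htop : Tendsto (fun z : ℝ => ψ x + s * (z - x)) atTop atTop := by
      have h1 : Tendsto (fun z : ℝ => s * z) atTop atTop :=
        Tendsto.const_mul_atTop hs0 tendsto_id
      have h2 := Filter.tendsto_atTop_add_const_right atTop (ψ x - s * x) h1
      refine h2.congr (fun z => by ring)
    obtain ⟨z₀, hz₀⟩ := (Filter.tendsto_atTop.1 htop (Ccall ν 0 + 1)).exists_forall_of_atTop
    set z := max z₀ (max (y + 1) 0) with hz
    have hz1 : Ccall ν 0 + 1 ≤ ψ x + s * (z - x) := hz₀ z (le_max_left _ _)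
    have hzy : y < z := lt_of_lt_of_le (by linarith) (le_trans (le_max_left _ _) (le_max_right _ _))
    have hz0 : (0 : ℝ) ≤ z := le_trans (le_max_right _ _) (le_max_right _ _)
    have hzx : 0 < z - x := by linarith
    -- convexity of F at the combination y = θ x + (1-θ) z
    have hθ1 : 0 ≤ (z - y) / (z - x) := div_nonneg (by linarith) (by linarith)
    have hθ2 : 0 ≤ (y - x) / (z - x) := div_nonneg (by linarith) (by linarith)
    have hθ3 : (z - y) / (z - x) + (y - x) / (z - x) = 1 := by
      field_simp
      ring
    have hcomb : ((z - y) / (z - x)) • x + ((y - x) / (z - x)) • z = y := by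
      simp only [smul_eq_mul]
      field_simp
      ring
    have hconv := hFconv.2 (mem_univ x) (mem_univ z) hθ1 hθ2 hθ3
    rw [hcomb] at hconv
    simp only [smul_eq_mul] at hconv
    -- translate to ψ
    have hψconv : (z - x) * ψ y ≤ (z - y) * ψ x + (y - x) * ψ z := by
      simp only [hψdef]
      have e1 : (z - y) / (z - x) * F x = ((z - y) * F x) / (z - x) := by ring
      have hconv' : (z - x) * F y ≤ (z - y) * F x + (y - x) * F z := by
        have := mul_le_mul_of_nonneg_left hconv (le_of_lt hzx)
        calc (z - x) * F y ≤ (z - x) * ((z - y) / (z - x) * F x + (y - x) / (z - x) * F z) := this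
          _ = (z - y) * F x + (y - x) * F z := by field_simp
      nlinarith
    have hub := hψub z hz0
    -- derive contradiction
    have key : (y - x) * ψ z ≥ (y - x) * (ψ x + s * (z - x)) := by
      have h1 : (y - x) * (ψ x + s * (z - x)) = (y - x) * ψ x + (ψ y - ψ x) * (z - x) := by
        rw [← hseq]; ring
      nlinarith
    have : ψ x + s * (z - x) ≤ ψ z := le_of_mul_le_mul_left (by linarith [key]) hyx
    linarith
  -- the limit L
  have hbb : BddBelow (Set.range ψ) := ⟨-c, by rintro - ⟨k, rfl⟩; exact hψlb k⟩
  set L := ⨅ k, ψ k with hL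
  have hψgeL : ∀ k, L ≤ ψ k := fun k => ciInf_le hbb k
  have hLgec : -c ≤ L := le_ciInf hψlb
  have hcleL : c ≤ -L := by
    rw [hc, cconst]
    refine ciSup_le fun k => ?_
    have h1 : Ccall μ k - Ccall ν k = a * k + b - f k := by rw [hfab k]; ring
    have h2 := hFle k
    have h3 := hψgeL k
    simp only [hψdef] at h3
    linarith
  have hLc : L = -c := le_antisymm (by linarith) hLgec
  have hψtend : Tendsto ψ atTop (nhds L) := tendsto_atTop_ciInf hψanti hbb
  -- the shadow side
  have hPS : ∀ k, Pput S k = Pput ν k - F k - p := hSP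
  set e := mass S - mass μ with he
  set d := mean μ - mean S with hd
  have hφ : ∀ k, Ccall μ k - Ccall S k = (F k - f k) + p + d + e * k := by
    intro k
    have h1 := parity hμ k
    have h2 := parity hSM k
    have h3 := hPS k
    simp only [hfdef, he, hd]
    linarith [h1, h2, h3, sub_mul (mass S) (mass μ) k]
  have htend0 : Tendsto (fun k => Ccall μ k - Ccall S k) atTop (nhds 0) := by
    have := (Ccall_tendsto hμ).sub (Ccall_tendsto hSM)
    simpa using this
  have htendν : Tendsto (fun k => Ccall ν k - Ccall μ k) atTop (nhds 0) := by
    have := (Ccall_tendsto hν).sub (Ccall_tendsto hμ)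
    simpa using this
  have hek : ∀ k, e * k =
      (Ccall μ k - Ccall S k) - ψ k + (Ccall ν k - Ccall μ k) - p - d := by
    intro k
    have h1 := hφ k
    have h2 := hfab k
    simp only [hψdef]
    linarith
  have htende : Tendsto (fun k => e * k) atTop (nhds (0 - L + 0 - p - d)) := by
    refine Tendsto.congr (fun k => (hek k).symm) ?_
    exact (((htend0.sub hψtend).add htendν).sub tendsto_const_nhds).sub tendsto_const_nhds
  have he0 : e = 0 := by
    by_contra hene
    rcases lt_or_gt_of_ne hene with hlt | hgt
    · have : Tendsto (fun k : ℝ => e * k) atTop atBot :=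
        Tendsto.const_mul_atTop_of_neg hlt tendsto_id
      exact not_tendsto_atBot_of_tendsto_nhds htende this
    · have : Tendsto (fun k : ℝ => e * k) atTop atTop :=
        Tendsto.const_mul_atTop hgt tendsto_id
      exact not_tendsto_atTop_of_tendsto_nhds htende this
  have hpd : p + d = c := by
    have h1 : Tendsto (fun k : ℝ => e * k) atTop (nhds 0) := by
      simp [he0]
    have h2 := tendsto_nhds_unique htende h1
    rw [hLc] at h2
    linarith
  -- sup lemma
  have hkey : ∀ t : ℝ, (⨆ k, ((F k - f k) + t)) = t := by
    intro t
    have hub : ∀ k, (F k - f k) + t ≤ t := fun k => by linarith [hFle k]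
    have hbdd' : BddAbove (Set.range fun k => (F k - f k) + t) :=
      ⟨t, by rintro - ⟨k, rfl⟩; exact hub k⟩
    refine le_antisymm (ciSup_le hub) ?_
    by_contra hcon
    push_neg at hcon
    set ε := t - (⨆ k, ((F k - f k) + t)) with hε
    have hε0 : 0 < ε := by simp only [hε]; linarith
    have hlt : p - ε < ⨆ k, (Pput μ k - Pput ν k) := by
      rw [hp, pconst] at *; linarith
    obtain ⟨k, hk⟩ := exists_lt_of_lt_ciSup hlt
    have hfk : f k < -p + ε := by simp only [hfdef]; linarith
    have h1 : -ε < F k - f k := by linarith [hFgep k]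
    have h2 : (F k - f k) + t ≤ ⨆ k, ((F k - f k) + t) := le_ciSup hbdd' k
    simp only [hε] at *
    linarith
  constructor
  · have : ∀ k, Pput μ k - Pput S k = (F k - f k) + p := by
      intro k
      have := hPS k
      simp only [hfdef]
      linarith
    calc pconst μ S = ⨆ k, ((F k - f k) + p) := by
          rw [pconst]; exact iSup_congr this
      _ = p := hkey p
  · have hφ' : ∀ k, Ccall μ k - Ccall S k = (F k - f k) + c := by
      intro k
      have := hφ k
      rw [he0] at this
      linarith [this, hpd]
    calc cconst μ S = ⨆ k, ((F k - f k) + c) := by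
          rw [cconst]; exact iSup_congr hφ'
      _ = c := hkey c

end
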